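/- For every integer $f \ge 1$, the identity $\sum_{u=0}^{f} \sum_{x=0}^{f-u} (-1)^{u+x}\, v^{u(1-f) - u(u+1)/2 - (f+u+1)x}\, \dfrac{1}{[x]!\,[f-u-x]!}\, (v - v^{-1})^u = 0$ holds in $\mathbb{Q}(v)$. -/

import Mathlib

noncomputable section

abbrev K : Type := RatFunc ℚ

/-- The indeterminate `v` in `ℚ(v)`. -/
def v : K := RatFunc.X

/-- Quantum integer `[m] = (v^m - v^{-m})/(v - v^{-1})`. -/
def qint (m : ℤ) : K := (v ^ m - v ^ (-m)) / (v - v⁻¹)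

/-- Quantum factorial `[r]! = ∏_{i=1}^r [i]`. -/
def qfact (r : ℕ) : K := ∏ i ∈ Finset.range r, qint ((i : ℤ) + 1)

/-- Quantum double factorial `[2r]!! = ∏_{i=1}^r [2i]`. -/
def qdfact (r : ℕ) : K := ∏ i ∈ Finset.range r, qint (2 * ((i : ℤ) + 1))

/-- Balanced Gaussian binomial coefficient `[m][m-1]⋯[m-r+1]/[r]!`. -/
def qbinom (m : ℤ) (r : ℕ) : K := (∏ i ∈ Finset.range r, qint (m - (i : ℤ))) / qfact r

/-- Gaussian binomial with integer lower index, vanishing for negative lower index. -/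
def qbinomZ (m r : ℤ) : K := if 0 ≤ r then qbinom m r.toNat else 0


/-!
Write `S_n(z) = ∑_{x ≤ n} (-z)^x v^{-(n+1)x} / ([x]! [n-x]!)`. For fixed `u` the inner sum over
`x` is a monomial times `S_{f-u}(v^{-2u})`. By the `q`-binomial theorem
`[n]! S_n(z) = ∏_{j<n} (1 - z v^{-2(j+1)})`, and `1 - v^{-2m} = v^{-m} (v - v⁻¹) [m]`, so the
`u`-th inner sum is a factor independent of `u` times the `u`-th term of `S_f(v^2)`.
Hence the double sum is a multiple of `S_f(v^2)`, which vanishes because the factor `j = 0` of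
its product is `1 - v^2 v^{-2} = 0`.
-/

open Finset

lemma v_ne_zero : v ≠ 0 := RatFunc.X_ne_zero

lemma v_pow_ne_one {k : ℕ} (hk : k ≠ 0) : v ^ k ≠ 1 := by
  intro h
  have hX : (Polynomial.X : Polynomial ℚ) ^ k = 1 := by
    apply RatFunc.algebraMap_injective ℚ
    simpa [v, RatFunc.algebraMap_X] using h
  simpa [hk] using congrArg Polynomial.natDegree hX

lemma v_zpow_sub_zpow_neg_ne_zero {k : ℕ} (hk : k ≠ 0) :
    v ^ (k : ℤ) - v ^ (-(k : ℤ)) ≠ 0 := by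
  intro h
  apply v_pow_ne_one (k := 2 * k) (by omega)
  calc v ^ (2 * k) = v ^ (k : ℤ) * (v ^ (k : ℤ) - v ^ (-(k : ℤ))) + 1 := by
        rw [mul_sub, ← zpow_add₀ v_ne_zero, ← zpow_add₀ v_ne_zero, add_neg_cancel, ← two_mul,
          zpow_zero]
        norm_cast
        ring
    _ = 1 := by rw [h, mul_zero, zero_add]

lemma v_sub_inv_ne_zero : v - v⁻¹ ≠ 0 := by
  simpa using v_zpow_sub_zpow_neg_ne_zero one_ne_zero

lemma qint_zero : qint 0 = 0 := by simp [qint]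

lemma qint_natCast_ne_zero {k : ℕ} (hk : k ≠ 0) : qint k ≠ 0 :=
  div_ne_zero (v_zpow_sub_zpow_neg_ne_zero hk) v_sub_inv_ne_zero

lemma qint_natCast_succ_ne_zero (k : ℕ) : qint ((k : ℤ) + 1) ≠ 0 := by
  exact_mod_cast qint_natCast_ne_zero k.succ_ne_zero

lemma qint_add (a b : ℤ) : qint (a + b) = v ^ b * qint a + v ^ (-a) * qint b := by
  simp only [qint, zpow_add₀ v_ne_zero, neg_add]
  ring

lemma one_sub_v_zpow_neg_two_mul (m : ℤ) :
    1 - v ^ (-(2 * m)) = v ^ (-m) * (v - v⁻¹) * qint m := by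
  rw [qint, mul_assoc, mul_div_cancel₀ _ v_sub_inv_ne_zero, mul_sub, ← zpow_add₀ v_ne_zero,
    ← zpow_add₀ v_ne_zero, neg_add_cancel, zpow_zero, ← neg_add, ← two_mul]

lemma qfact_zero : qfact 0 = 1 := prod_range_zero _

lemma qfact_succ (r : ℕ) : qfact (r + 1) = qfact r * qint ((r : ℤ) + 1) :=
  prod_range_succ _ r

lemma qfact_ne_zero (r : ℕ) : qfact r ≠ 0 :=
  prod_ne_zero_iff.2 fun i _ => qint_natCast_succ_ne_zero i

lemma qfact_add (a b : ℕ) :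
    qfact (a + b) = qfact a * ∏ j ∈ range b, qint ((a : ℤ) + j + 1) := by
  rw [qfact, prod_range_add]
  push_cast
  simp only [add_assoc]
  rfl

def altSum (z : K) (n : ℕ) : K :=
  ∑ x ∈ range (n + 1), (-1) ^ x * z ^ x * v ^ (-((n : ℤ) + 1) * x) / (qfact x * qfact (n - x))

lemma sum_qint_sub_div_qfact (z : K) (n : ℕ) :
    ∑ x ∈ range (n + 2), (-1) ^ x * z ^ x * v ^ (-((n : ℤ) + 1) * x)
      * qint ((n : ℤ) + 1 - x) / (qfact x * qfact (n + 1 - x)) = altSum z n := by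
  rw [sum_range_succ, Nat.cast_succ, sub_self, qint_zero, mul_zero, zero_div, add_zero, altSum]
  refine sum_congr rfl fun x hx => ?_
  have hxn : x ≤ n := Nat.lt_succ_iff.1 (mem_range.1 hx)
  rw [Nat.sub_add_comm hxn, qfact_succ, show (n : ℤ) + 1 - x = ((n - x : ℕ) : ℤ) + 1 by omega]
  have := qint_natCast_succ_ne_zero (n - x)
  have := qfact_ne_zero x
  have := qfact_ne_zero (n - x)
  field_simp

lemma sum_v_zpow_qint_div_qfact (z : K) (n : ℕ) :
    ∑ x ∈ range (n + 2), (-1) ^ x * z ^ x * v ^ (-((n : ℤ) + 2) * x - ((n : ℤ) + 1 - x))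
      * qint x / (qfact x * qfact (n + 1 - x))
      = -(z * v ^ (-(2 * ((n : ℤ) + 1)))) * altSum z n := by
  rw [sum_range_succ', Nat.cast_zero, qint_zero, mul_zero, zero_div, add_zero, altSum, mul_sum]
  refine sum_congr rfl fun y _ => ?_
  have hexp : v ^ (-((n : ℤ) + 2) * ↑(y + 1) - ((n : ℤ) + 1 - ↑(y + 1)))
      = v ^ (-(2 * ((n : ℤ) + 1))) * v ^ (-((n : ℤ) + 1) * y) := by
    rw [← zpow_add₀ v_ne_zero]
    push_cast
    ring_nf
  rw [hexp, Nat.add_sub_add_right, qfact_succ, Nat.cast_succ]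
  have := qint_natCast_succ_ne_zero y
  have := qfact_ne_zero y
  have := qfact_ne_zero (n - y)
  field_simp
  ring

lemma qint_mul_altSum_succ (z : K) (n : ℕ) :
    qint ((n : ℤ) + 1) * altSum z (n + 1)
      = (1 - z * v ^ (-(2 * ((n : ℤ) + 1)))) * altSum z n := by
  rw [sub_mul, one_mul, sub_eq_add_neg, neg_mul_eq_neg_mul, ← sum_v_zpow_qint_div_qfact z n,
    ← sum_qint_sub_div_qfact z n, ← sum_add_distrib, altSum, mul_sum]
  refine sum_congr rfl fun x _ => ?_
  have hsplit := qint_add ((n : ℤ) + 1 - x) x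
  rw [sub_add_cancel] at hsplit
  rw [hsplit]
  have hA : v ^ (-((n + 1 : ℕ) + 1 : ℤ) * x) * v ^ (x : ℤ) = v ^ (-((n : ℤ) + 1) * x) := by
    rw [← zpow_add₀ v_ne_zero]; push_cast; ring_nf
  have hB : v ^ (-((n + 1 : ℕ) + 1 : ℤ) * x) * v ^ (-((n : ℤ) + 1 - x))
      = v ^ (-((n : ℤ) + 2) * x - ((n : ℤ) + 1 - x)) := by
    rw [← zpow_add₀ v_ne_zero]; push_cast; ring_nf
  rw [← hA, ← hB]
  ring

/-- Rothe's `q`-binomial theorem, in the balanced normalization. -/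
theorem altSum_mul_qfact (z : K) (n : ℕ) :
    altSum z n * qfact n = ∏ j ∈ range n, (1 - z * v ^ (-(2 * ((j : ℤ) + 1)))) := by
  induction n with
  | zero => simp [altSum, qfact_zero]
  | succ n ih =>
    rw [prod_range_succ, ← ih, qfact_succ]
    linear_combination qfact n * qint_mul_altSum_succ z n

lemma altSum_v_sq_eq_zero {n : ℕ} (hn : n ≠ 0) : altSum (v ^ 2) n = 0 := by
  have hprod : ∏ j ∈ range n, (1 - v ^ 2 * v ^ (-(2 * ((j : ℤ) + 1)))) = 0 := by
    refine prod_eq_zero (i := 0) (mem_range.2 (Nat.pos_of_ne_zero hn)) ?_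
    rw [Nat.cast_zero, zero_add, mul_one, zpow_neg, zpow_two, ← pow_two, mul_inv_cancel₀
      (pow_ne_zero 2 v_ne_zero), sub_self]
  rw [← altSum_mul_qfact, mul_eq_zero] at hprod
  exact hprod.resolve_right (qfact_ne_zero n)

lemma add_one_mul_add_two_ediv_two (m : ℤ) :
    (m + 1) * (m + 1 + 1) / 2 = m * (m + 1) / 2 + (m + 1) := by
  rw [show (m + 1) * (m + 1 + 1) = m * (m + 1) + (m + 1) * 2 by ring,
    Int.add_mul_ediv_right _ _ two_ne_zero]

lemma prod_v_zpow_neg (a b : ℕ) :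
    ∏ j ∈ range b, v ^ (-((a : ℤ) + j + 1))
      = v ^ ((a : ℤ) * (a + 1) / 2 - ((a + b : ℕ) : ℤ) * ((a + b : ℕ) + 1) / 2) := by
  induction b with
  | zero => simp
  | succ b ih =>
    rw [prod_range_succ, ih, ← zpow_add₀ v_ne_zero, ← add_assoc, Nat.cast_succ,
      add_one_mul_add_two_ediv_two]
    push_cast
    ring_nf

lemma altSum_v_zpow_mul_qfact_mul_qfact (a b : ℕ) :
    altSum (v ^ (-(2 * (a : ℤ)))) b * qfact a * qfact b
      = v ^ ((a : ℤ) * (a + 1) / 2 - ((a + b : ℕ) : ℤ) * ((a + b : ℕ) + 1) / 2)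
        * (v - v⁻¹) ^ b * qfact (a + b) := by
  have hfactor : ∀ j : ℕ, 1 - v ^ (-(2 * (a : ℤ))) * v ^ (-(2 * ((j : ℤ) + 1)))
      = v ^ (-((a : ℤ) + j + 1)) * (v - v⁻¹) * qint ((a : ℤ) + j + 1) := fun j => by
    rw [← one_sub_v_zpow_neg_two_mul, ← zpow_add₀ v_ne_zero]
    ring_nf
  rw [mul_right_comm, altSum_mul_qfact, prod_congr rfl fun j _ => hfactor j, prod_mul_distrib,
    prod_mul_distrib, prod_const, card_range, prod_v_zpow_neg, qfact_add]
  ring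

lemma inner_sum_eq_mul_altSum_v_sq_term {f u : ℕ} (hu : u ≤ f) :
    ∑ x ∈ range (f - u + 1), (-1 : K) ^ (u + x) *
        v ^ ((u : ℤ) * (1 - (f : ℤ)) - (u : ℤ) * ((u : ℤ) + 1) / 2
              - ((f : ℤ) + u + 1) * x) *
        (1 / (qfact x * qfact (f - u - x))) * (v - v⁻¹) ^ u
      = v ^ (-((f : ℤ) * (f + 1) / 2)) * (v - v⁻¹) ^ f * qfact f *
        ((-1) ^ u * (v ^ 2) ^ u * v ^ (-((f : ℤ) + 1) * u) / (qfact u * qfact (f - u))) := by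
  have hinner : ∑ x ∈ range (f - u + 1), (-1 : K) ^ (u + x) *
        v ^ ((u : ℤ) * (1 - (f : ℤ)) - (u : ℤ) * ((u : ℤ) + 1) / 2
              - ((f : ℤ) + u + 1) * x) *
        (1 / (qfact x * qfact (f - u - x))) * (v - v⁻¹) ^ u
      = (-1) ^ u * v ^ ((u : ℤ) * (1 - (f : ℤ)) - (u : ℤ) * ((u : ℤ) + 1) / 2)
        * (v - v⁻¹) ^ u * altSum (v ^ (-(2 * (u : ℤ)))) (f - u) := by
    rw [altSum, mul_sum]
    refine sum_congr rfl fun x _ => ?_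
    have hexp :
        v ^ ((u : ℤ) * (1 - (f : ℤ)) - (u : ℤ) * ((u : ℤ) + 1) / 2 - ((f : ℤ) + u + 1) * x)
          = v ^ ((u : ℤ) * (1 - (f : ℤ)) - (u : ℤ) * ((u : ℤ) + 1) / 2)
            * (v ^ (-(2 * (u : ℤ)))) ^ x * v ^ (-(((f - u : ℕ) : ℤ) + 1) * x) := by
      rw [← zpow_natCast _ x, ← zpow_mul, ← zpow_add₀ v_ne_zero, ← zpow_add₀ v_ne_zero,
        Nat.cast_sub hu]
      ring_nf
    rw [pow_add, hexp]
    ring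
  have hclosed := altSum_v_zpow_mul_qfact_mul_qfact u (f - u)
  rw [Nat.add_sub_cancel' hu] at hclosed
  have hexp : v ^ ((u : ℤ) * (1 - (f : ℤ)) - (u : ℤ) * ((u : ℤ) + 1) / 2)
      * v ^ ((u : ℤ) * (u + 1) / 2 - (f : ℤ) * (f + 1) / 2)
      = v ^ (-((f : ℤ) * (f + 1) / 2)) * (v ^ 2) ^ u * v ^ (-((f : ℤ) + 1) * u) := by
    rw [← zpow_natCast _ u, ← zpow_natCast v 2, ← zpow_mul, ← zpow_add₀ v_ne_zero,
      ← zpow_add₀ v_ne_zero, ← zpow_add₀ v_ne_zero]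
    ring_nf
  have hpow : (v - v⁻¹) ^ u * (v - v⁻¹) ^ (f - u) = (v - v⁻¹) ^ f := by
    rw [← pow_add, Nat.add_sub_cancel' hu]
  rw [hinner, mul_div_assoc', eq_div_iff (mul_ne_zero (qfact_ne_zero u) (qfact_ne_zero (f - u)))]
  linear_combination (-1) ^ u * v ^ ((u : ℤ) * (1 - (f : ℤ)) - (u : ℤ) * ((u : ℤ) + 1) / 2)
      * (v - v⁻¹) ^ u * hclosed
    + (-1) ^ u * (v - v⁻¹) ^ u * (v - v⁻¹) ^ (f - u) * qfact f * hexp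
    + (-1) ^ u * v ^ (-((f : ℤ) * (f + 1) / 2)) * (v ^ 2) ^ u * v ^ (-((f : ℤ) + 1) * u)
      * qfact f * hpow

theorem stmt11 (f : ℕ) (hf : 1 ≤ f) :
    ∑ u ∈ Finset.range (f + 1), ∑ x ∈ Finset.range (f - u + 1),
      (-1 : K) ^ (u + x) *
        v ^ ((u : ℤ) * (1 - (f : ℤ)) - (u : ℤ) * ((u : ℤ) + 1) / 2
              - ((f : ℤ) + u + 1) * x) *
        (1 / (qfact x * qfact (f - u - x))) * (v - v⁻¹) ^ u
    = 0 := by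
  rw [sum_congr rfl fun u hu =>
    inner_sum_eq_mul_altSum_v_sq_term (Nat.lt_succ_iff.1 (mem_range.1 hu)), ← mul_sum]
  exact mul_eq_zero_of_right _ (altSum_v_sq_eq_zero (by omega))
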